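/- arXiv:1807.11170 — 3 statements merged into one kernel-verified Lean document; each statement's English description precedes it below -/
import Mathlib

section
/- Let N ≥ 2 be an integer, Ω ⊆ ℝ^N a nonempty bounded open set, ε > 0, and A, B, p, q positive real constants. Let g be a smooth function that is positive on the closure of Ω, and let u be continuous on the closure of Ω, twice continuously differentiable on Ω, with e^{pu} and e^{-qu} integrable on Ω, satisfying the non-local equation ε² ∇·(g∇u)(x) = w(x) for every x ∈ Ω, where w(x) := A e^{p u(x)} / (|Ω|⁻¹ ∫_Ω e^{p u(y)} dy) − B e^{-q u(x)} / (|Ω|⁻¹ ∫_Ω e^{-q u(y)} dy). Then: (i) if 0 < A < B and u attains its maximum over the closure of Ω at some interior point x₀ ∈ Ω, then A − B ≤ sup_{closure(Ω)} w ≤ 0 and ‖e^{u}‖_{L^p(Ω)} · ‖e^{-u}‖_{L^q(Ω)} ≤ |Ω|^{1/p + 1/q} (B/A)^{1/q}; (ii) if 0 < B < A and u attains its minimum over the closure of Ω at some interior point, then 0 ≤ inf_{closure(Ω)} w ≤ A − B and ‖e^{u}‖_{L^p(Ω)} · ‖e^{-u}‖_{L^q(Ω)} ≤ |Ω|^{1/p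 + 1/q} (A/B)^{1/p}. In particular, in either case ‖e^{u}‖_{L^p(Ω)} · ‖e^{-u}‖_{L^q(Ω)} ≤ |Ω|^{1/p + 1/q} max{(B/A)^{1/q}, (A/B)^{1/p}} (the inverse Hölder type estimate). -/
open Real MeasureTheory Set Filter Topology

noncomputable section

/-- The divergence-form operator `∇·(g∇u) = Σᵢ ∂ᵢ(g ∂ᵢ u)` on `ℝ^N`. -/
def divGGrad (N : ℕ) (g u : EuclideanSpace ℝ (Fin N) → ℝ)
    (x : EuclideanSpace ℝ (Fin N)) : ℝ :=
  ∑ i : Fin N,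
    fderiv ℝ (fun y => g y * fderiv ℝ u y (EuclideanSpace.single i 1)) x
      (EuclideanSpace.single i 1)

/-- The non-local nonlinearity
`w(x) = A e^{pu(x)} / (|Ω|⁻¹ ∫_Ω e^{pu}) − B e^{-qu(x)} / (|Ω|⁻¹ ∫_Ω e^{-qu})`. -/
def nonlocalW (N : ℕ) (A B p q : ℝ) (Ω : Set (EuclideanSpace ℝ (Fin N)))
    (u : EuclideanSpace ℝ (Fin N) → ℝ) (x : EuclideanSpace ℝ (Fin N)) : ℝ :=
  A * Real.exp (p * u x) / ((volume Ω).toReal⁻¹ * ∫ y in Ω, Real.exp (p * u y))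
    - B * Real.exp (-q * u x) / ((volume Ω).toReal⁻¹ * ∫ y in Ω, Real.exp (-q * u y))

/-- Second derivative test (necessary condition): at an interior maximum the second
directional derivative is nonpositive. -/
lemma secondDeriv_nonpos_at_localMax {E : Type*} [NormedAddCommGroup E] [NormedSpace ℝ E]
    {u : E → ℝ} {Ω : Set E} (hΩo : IsOpen Ω) {x₀ : E} (hx₀ : x₀ ∈ Ω)
    (hu : ContDiffOn ℝ 2 u Ω) (hmax : ∀ x ∈ Ω, u x ≤ u x₀) (e : E) :
    fderiv ℝ (fun y => fderiv ℝ u y e) x₀ e ≤ 0 := by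
  set f' : E → ℝ := fun y => fderiv ℝ u y e with hf'
  have hloc : IsLocalMax u x₀ := Filter.eventually_of_mem (hΩo.mem_nhds hx₀) hmax
  have hder0 : fderiv ℝ u x₀ = 0 := hloc.fderiv_eq_zero
  have hdiff : ∀ x ∈ Ω, DifferentiableAt ℝ u x := fun x hx =>
    (hu.contDiffAt (hΩo.mem_nhds hx)).differentiableAt two_ne_zero
  have hct : ContDiffAt ℝ 2 u x₀ := hu.contDiffAt (hΩo.mem_nhds hx₀)
  have h1 : ContDiffAt ℝ 1 (fderiv ℝ u) x₀ := hct.fderiv_right (by norm_num)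
  have hf'diff : DifferentiableAt ℝ f' x₀ :=
    (h1.differentiableAt one_ne_zero).clm_apply (differentiableAt_const e)
  set F : ℝ → E := fun t => x₀ + t • e with hFdef
  have hF : ∀ t : ℝ, HasDerivAt F e t := by
    intro t
    simpa [hFdef] using (((hasDerivAt_id t).smul_const e).const_add x₀)
  have hF0 : F 0 = x₀ := by simp [hFdef]
  have hFc : Continuous F := by fun_prop
  have hso : IsOpen (F ⁻¹' Ω) := hΩo.preimage hFc
  have h0s : (0:ℝ) ∈ F ⁻¹' Ω := by simp [hFdef, hx₀]
  obtain ⟨δ₀, hδ₀, hball⟩ := Metric.isOpen_iff.1 hso 0 h0s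
  set φ : ℝ → ℝ := fun t => u (F t) with hφdef
  set ψ : ℝ → ℝ := fun t => f' (F t) with hψdef
  have hφ : ∀ t ∈ F ⁻¹' Ω, HasDerivAt φ (ψ t) t := fun t ht =>
    ((hdiff _ ht).hasFDerivAt.comp_hasDerivAt t (hF t))
  have hψ0 : ψ 0 = 0 := by simp [hψdef, hf', hF0, hder0]
  have hψd : HasDerivAt ψ (fderiv ℝ f' x₀ e) 0 := by
    have hfd : HasFDerivAt f' (fderiv ℝ f' x₀) (F 0) := hF0.symm ▸ hf'diff.hasFDerivAt
    exact hfd.comp_hasDerivAt 0 (hF 0)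
  by_contra hpos
  push_neg at hpos
  have hslope : Tendsto (slope ψ 0) (𝓝[≠] 0) (𝓝 (fderiv ℝ f' x₀ e)) :=
    hasDerivAt_iff_tendsto_slope.1 hψd
  have hev : ∀ᶠ t in 𝓝[≠] (0:ℝ), 0 < slope ψ 0 t :=
    hslope.eventually (eventually_gt_nhds hpos)
  rw [eventually_nhdsWithin_iff, Metric.eventually_nhds_iff] at hev
  obtain ⟨δ, hδ, hev⟩ := hev
  set b : ℝ := min δ δ₀ / 2 with hbdef
  have hb : 0 < b := by positivity
  have hbδ₀ : b < δ₀ := by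
    have : min δ δ₀ ≤ δ₀ := min_le_right _ _
    simp only [hbdef]; linarith
  have hbδ : b < δ := by
    have : min δ δ₀ ≤ δ := min_le_left _ _
    simp only [hbdef]; linarith
  have hbs : ∀ t ∈ Set.Icc (0:ℝ) b, t ∈ F ⁻¹' Ω := by
    intro t ht
    apply hball
    simp only [Metric.mem_ball, Real.dist_eq, sub_zero]
    rw [abs_of_nonneg ht.1]
    linarith [ht.2]
  obtain ⟨c, hc, hceq⟩ := exists_hasDerivAt_eq_slope φ ψ hb
    (fun t ht => (hφ t (hbs t ht)).continuousAt.continuousWithinAt)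
    (fun t ht => hφ t (hbs t ⟨ht.1.le, ht.2.le⟩))
  have hψc_nonpos : ψ c ≤ 0 := by
    rw [hceq]
    have hφb : φ b ≤ φ 0 := by
      show u (F b) ≤ u (F 0)
      rw [hF0]
      exact hmax _ (hbs b ⟨hb.le, le_rfl⟩)
    apply div_nonpos_of_nonpos_of_nonneg <;> linarith
  have hcδ : dist c 0 < δ := by
    simp only [Real.dist_eq, sub_zero]
    rw [abs_of_pos hc.1]
    linarith [hc.2]
  have hsp := hev hcδ (by simp; exact ne_of_gt hc.1)
  rw [slope_def_field, hψ0, sub_zero, sub_zero] at hsp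
  have := mul_pos hsp hc.1
  rw [div_mul_cancel₀ _ (ne_of_gt hc.1)] at this
  linarith

/-- The divergence-form operator is nonpositive at an interior maximum. -/
lemma divGGrad_nonpos_at_localMax {N : ℕ} {Ω : Set (EuclideanSpace ℝ (Fin N))}
    (hΩo : IsOpen Ω) {x₀ : EuclideanSpace ℝ (Fin N)} (hx₀ : x₀ ∈ Ω)
    {g u : EuclideanSpace ℝ (Fin N) → ℝ} (hg : ContDiff ℝ (⊤ : ℕ∞) g) (hgpos : 0 ≤ g x₀)
    (hu : ContDiffOn ℝ 2 u Ω) (hmax : ∀ x ∈ Ω, u x ≤ u x₀) :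
    divGGrad N g u x₀ ≤ 0 := by
  have hloc : IsLocalMax u x₀ := Filter.eventually_of_mem (hΩo.mem_nhds hx₀) hmax
  have hder0 : fderiv ℝ u x₀ = 0 := hloc.fderiv_eq_zero
  have hct : ContDiffAt ℝ 2 u x₀ := hu.contDiffAt (hΩo.mem_nhds hx₀)
  have h1 : ContDiffAt ℝ 1 (fderiv ℝ u) x₀ := hct.fderiv_right (by norm_num)
  have hgd : DifferentiableAt ℝ g x₀ := (hg.differentiable (by simp)).differentiableAt
  apply Finset.sum_nonpos
  intro i _
  set e := EuclideanSpace.single (𝕜 := ℝ) i (1:ℝ) with he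
  have hf'diff : DifferentiableAt ℝ (fun y => fderiv ℝ u y e) x₀ :=
    (h1.differentiableAt one_ne_zero).clm_apply (differentiableAt_const e)
  rw [fderiv_fun_mul hgd hf'diff]
  have h0 : fderiv ℝ u x₀ e = 0 := by rw [hder0]; rfl
  simp only [ContinuousLinearMap.add_apply, ContinuousLinearMap.smul_apply, h0,
    smul_eq_mul, zero_smul, ContinuousLinearMap.zero_apply, mul_zero, add_zero, zero_mul]
  have hsec := secondDeriv_nonpos_at_localMax hΩo hx₀ hu hmax e
  exact mul_nonpos_of_nonneg_of_nonpos hgpos hsec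

lemma divGGrad_neg (N : ℕ) (g u : EuclideanSpace ℝ (Fin N) → ℝ)
    (x : EuclideanSpace ℝ (Fin N)) :
    divGGrad N g (fun y => -u y) x = -divGGrad N g u x := by
  unfold divGGrad
  rw [← Finset.sum_neg_distrib]
  apply Finset.sum_congr rfl
  intro i _
  have h1 : (fun y => g y * fderiv ℝ (fun z => -u z) y (EuclideanSpace.single i 1))
      = fun y => -(g y * fderiv ℝ u y (EuclideanSpace.single i 1)) := by
    funext y
    rw [fderiv_fun_neg]
    simp [ContinuousLinearMap.neg_apply]
  rw [h1, fderiv_fun_neg]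
  simp [ContinuousLinearMap.neg_apply]

lemma nonlocalW_neg (N : ℕ) (A B p q : ℝ) (Ω : Set (EuclideanSpace ℝ (Fin N)))
    (u : EuclideanSpace ℝ (Fin N) → ℝ) (x : EuclideanSpace ℝ (Fin N)) :
    nonlocalW N B A q p Ω (fun y => -u y) x = -nonlocalW N A B p q Ω u x := by
  unfold nonlocalW
  simp only [mul_neg, neg_mul, neg_neg]
  ring

/-- Main pointwise lemma (maximum attained at interior point). -/
lemma mainMax {N : ℕ} {Ω : Set (EuclideanSpace ℝ (Fin N))} (hΩo : IsOpen Ω)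
    (hΩb : Bornology.IsBounded Ω)
    {ε A B p q : ℝ} (hA : 0 < A) (hB : 0 < B) (hp : 0 < p) (hq : 0 < q)
    {g u : EuclideanSpace ℝ (Fin N) → ℝ}
    (hg : ContDiff ℝ (⊤ : ℕ∞) g) (hgpos : ∀ x ∈ closure Ω, 0 < g x)
    (hu_c2 : ContDiffOn ℝ 2 u Ω)
    (hint_p : IntegrableOn (fun y => Real.exp (p * u y)) Ω)
    (hint_q : IntegrableOn (fun y => Real.exp (-q * u y)) Ω)
    (heq : ∀ x ∈ Ω, ε ^ 2 * divGGrad N g u x = nonlocalW N A B p q Ω u x)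
    {x₀ : EuclideanSpace ℝ (Fin N)} (hx₀ : x₀ ∈ Ω)
    (hmax : ∀ x ∈ closure Ω, u x ≤ u x₀) :
    (∀ x ∈ closure Ω, nonlocalW N A B p q Ω u x ≤ nonlocalW N A B p q Ω u x₀) ∧
    A - B ≤ nonlocalW N A B p q Ω u x₀ ∧ nonlocalW N A B p q Ω u x₀ ≤ 0 ∧
    (∫ y in Ω, Real.exp (p * u y)) ^ (1 / p) * (∫ y in Ω, Real.exp (-q * u y)) ^ (1 / q)
      ≤ (volume Ω).toReal ^ (1 / p + 1 / q) * (B / A) ^ (1 / q) := by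
  have hΩne : Ω.Nonempty := ⟨x₀, hx₀⟩
  set V : ℝ := (volume Ω).toReal with hVdef
  set Ip : ℝ := ∫ y in Ω, Real.exp (p * u y) with hIpdef
  set Iq : ℝ := ∫ y in Ω, Real.exp (-q * u y) with hIqdef
  have hμ0 : 0 < volume Ω := hΩo.measure_pos volume hΩne
  have hμtop : volume Ω < ⊤ := hΩb.measure_lt_top
  have hV : 0 < V := ENNReal.toReal_pos hμ0.ne' hμtop.ne
  have hIp : 0 < Ip := by
    rw [hIpdef, setIntegral_pos_iff_support_of_nonneg_ae
      (Filter.Eventually.of_forall fun y => (Real.exp_pos _).le) hint_p]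
    have : Function.support (fun y => Real.exp (p * u y)) = Set.univ := by
      ext y; simp [Real.exp_ne_zero]
    rw [this, Set.univ_inter]
    exact hμ0
  have hIq : 0 < Iq := by
    rw [hIqdef, setIntegral_pos_iff_support_of_nonneg_ae
      (Filter.Eventually.of_forall fun y => (Real.exp_pos _).le) hint_q]
    have : Function.support (fun y => Real.exp (-q * u y)) = Set.univ := by
      ext y; simp [Real.exp_ne_zero]
    rw [this, Set.univ_inter]
    exact hμ0
  set c₁ : ℝ := A / (V⁻¹ * Ip) with hc₁def
  set c₂ : ℝ := B / (V⁻¹ * Iq) with hc₂def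
  have hc₁ : 0 < c₁ := by positivity
  have hc₂ : 0 < c₂ := by positivity
  have hw : nonlocalW N A B p q Ω u = fun x => c₁ * Real.exp (p * u x) - c₂ * Real.exp (-q * u x) := by
    funext x
    rw [nonlocalW, hc₁def, hc₂def]
    ring
  set M : ℝ := u x₀ with hMdef
  have hmono : ∀ x ∈ closure Ω, nonlocalW N A B p q Ω u x ≤ nonlocalW N A B p q Ω u x₀ := by
    intro x hx
    rw [hw]
    have h1 : Real.exp (p * u x) ≤ Real.exp (p * M) :=
      Real.exp_le_exp.2 (by nlinarith [hmax x hx])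
    have h2 : Real.exp (-q * M) ≤ Real.exp (-q * u x) :=
      Real.exp_le_exp.2 (by nlinarith [hmax x hx])
    have := mul_le_mul_of_nonneg_left h1 hc₁.le
    have := mul_le_mul_of_nonneg_left h2 hc₂.le
    simp only
    linarith
  have hw_int : IntegrableOn (nonlocalW N A B p q Ω u) Ω := by
    rw [hw]
    exact (hint_p.const_mul c₁).sub (hint_q.const_mul c₂)
  have havg : ∫ x in Ω, nonlocalW N A B p q Ω u x = V * (A - B) := by
    rw [hw]
    rw [integral_sub (hint_p.const_mul c₁) (hint_q.const_mul c₂),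
      integral_const_mul, integral_const_mul, ← hIpdef, ← hIqdef, hc₁def, hc₂def]
    field_simp
  have hlow : A - B ≤ nonlocalW N A B p q Ω u x₀ := by
    have hle : ∫ x in Ω, nonlocalW N A B p q Ω u x
        ≤ ∫ _x in Ω, nonlocalW N A B p q Ω u x₀ :=
      setIntegral_mono_on hw_int (integrableOn_const hμtop.ne) hΩo.measurableSet
        (fun x hx => hmono x (subset_closure hx))
    rw [havg, setIntegral_const, smul_eq_mul] at hle
    exact le_of_mul_le_mul_left (by change V * (A - B) ≤ V * _ at hle; linarith) hV
  have hup : nonlocalW N A B p q Ω u x₀ ≤ 0 := by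
    rw [← heq x₀ hx₀]
    exact mul_nonpos_of_nonneg_of_nonpos (sq_nonneg ε)
      (divGGrad_nonpos_at_localMax hΩo hx₀ hg (hgpos x₀ (subset_closure hx₀)).le hu_c2
        (fun x hx => hmax x (subset_closure hx)))
  refine ⟨hmono, hlow, hup, ?_⟩
  have hkey : A * Real.exp (p * M) * Iq ≤ B * Real.exp (-q * M) * Ip := by
    rw [hw] at hup
    simp only at hup
    rw [hc₁def, hc₂def] at hup
    rw [div_mul_eq_mul_div, div_mul_eq_mul_div, sub_nonpos,
      div_le_div_iff₀ (by positivity) (by positivity)] at hup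
    have h3 := mul_le_mul_of_nonneg_left hup hV.le
    have hV' : V ≠ 0 := hV.ne'
    rw [show V * (A * rexp (p * u x₀) * (V⁻¹ * Iq)) = A * rexp (p * u x₀) * Iq from by
      field_simp] at h3
    rw [show V * (B * rexp (-q * u x₀) * (V⁻¹ * Ip)) = B * rexp (-q * u x₀) * Ip from by
      field_simp] at h3
    exact h3
  have hIpM : Ip ≤ V * Real.exp (p * M) := by
    have hle : ∀ y ∈ Ω, Real.exp (p * u y) ≤ Real.exp (p * M) := fun y hy =>
      Real.exp_le_exp.2 (mul_le_mul_of_nonneg_left (hmax y (subset_closure hy)) hp.le)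
    have := setIntegral_mono_on hint_p
      ((integrableOn_const hμtop.ne) : IntegrableOn (fun _ => Real.exp (p * M)) Ω volume)
      hΩo.measurableSet hle
    rwa [setIntegral_const, smul_eq_mul] at this
  have hIqB : Iq ≤ (B / A) * V * Real.exp (-q * M) := by
    have h2 : A * Real.exp (p * M) * Iq ≤ B * Real.exp (-q * M) * (V * Real.exp (p * M)) := by
      calc A * Real.exp (p * M) * Iq ≤ B * Real.exp (-q * M) * Ip := hkey
      _ ≤ _ := by
          apply mul_le_mul_of_nonneg_left hIpM (by positivity)
    rw [show (B / A) * V * Real.exp (-q * M)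
        = (B * Real.exp (-q * M) * (V * Real.exp (p * M))) / (A * Real.exp (p * M)) from by
      field_simp, le_div_iff₀ (by positivity)]
    linarith
  calc Ip ^ (1/p) * Iq ^ (1/q)
      ≤ (V * Real.exp (p * M)) ^ (1/p) * ((B / A) * V * Real.exp (-q * M)) ^ (1/q) := by
        apply mul_le_mul (Real.rpow_le_rpow hIp.le hIpM (by positivity))
          (Real.rpow_le_rpow hIq.le hIqB (by positivity)) (by positivity) (by positivity)
    _ = V ^ (1/p + 1/q) * (B / A) ^ (1/q) := by
        rw [Real.mul_rpow hV.le (Real.exp_pos _).le,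
          Real.mul_rpow (by positivity) (Real.exp_pos _).le,
          Real.mul_rpow (by positivity) hV.le,
          ← Real.exp_mul, ← Real.exp_mul, Real.rpow_add hV]
        rw [show p * M * (1/p) = M from by field_simp; try ring,
          show -q * M * (1/q) = -M from by field_simp; try ring]
        have hEE : Real.exp M * Real.exp (-M) = 1 := by
          rw [← Real.exp_add, add_neg_cancel, Real.exp_zero]
        calc V ^ (1/p) * Real.exp M * ((B / A) ^ (1/q) * V ^ (1/q) * Real.exp (-M))
            = V ^ (1/p) * V ^ (1/q) * (B / A) ^ (1/q) * (Real.exp M * Real.exp (-M)) := by ring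
          _ = V ^ (1/p) * V ^ (1/q) * (B / A) ^ (1/q) := by rw [hEE, mul_one]

/-- Sign bounds for the extremal values of the non-local nonlinearity `w` (when the
appropriate extremum of `u` is attained at an interior point) and the inverse Hölder
type estimate `‖e^u‖_{L^p(Ω)} ‖e^{-u}‖_{L^q(Ω)} ≤ |Ω|^{1/p+1/q} max{(B/A)^{1/q},(A/B)^{1/p}}`. -/
theorem stmt0 {N : ℕ} (hN : 2 ≤ N)
    (Ω : Set (EuclideanSpace ℝ (Fin N))) (hΩo : IsOpen Ω) (hΩne : Ω.Nonempty)
    (hΩb : Bornology.IsBounded Ω)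
    (ε A B p q : ℝ) (hε : 0 < ε) (hA : 0 < A) (hB : 0 < B) (hp : 0 < p) (hq : 0 < q)
    (g u : EuclideanSpace ℝ (Fin N) → ℝ)
    (hg : ContDiff ℝ (⊤ : ℕ∞) g) (hgpos : ∀ x ∈ closure Ω, 0 < g x)
    (hu_cont : ContinuousOn u (closure Ω)) (hu_c2 : ContDiffOn ℝ 2 u Ω)
    (hint_p : IntegrableOn (fun y => Real.exp (p * u y)) Ω)
    (hint_q : IntegrableOn (fun y => Real.exp (-q * u y)) Ω)
    (heq : ∀ x ∈ Ω, ε ^ 2 * divGGrad N g u x = nonlocalW N A B p q Ω u x) :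
    ((A < B ∧ ∃ x₀ ∈ Ω, ∀ x ∈ closure Ω, u x ≤ u x₀) →
      A - B ≤ sSup (nonlocalW N A B p q Ω u '' closure Ω) ∧
      sSup (nonlocalW N A B p q Ω u '' closure Ω) ≤ 0 ∧
      (∫ y in Ω, Real.exp (p * u y)) ^ (1 / p) * (∫ y in Ω, Real.exp (-q * u y)) ^ (1 / q)
        ≤ (volume Ω).toReal ^ (1 / p + 1 / q) * (B / A) ^ (1 / q)) ∧
    ((B < A ∧ ∃ x₀ ∈ Ω, ∀ x ∈ closure Ω, u x₀ ≤ u x) →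
      0 ≤ sInf (nonlocalW N A B p q Ω u '' closure Ω) ∧
      sInf (nonlocalW N A B p q Ω u '' closure Ω) ≤ A - B ∧
      (∫ y in Ω, Real.exp (p * u y)) ^ (1 / p) * (∫ y in Ω, Real.exp (-q * u y)) ^ (1 / q)
        ≤ (volume Ω).toReal ^ (1 / p + 1 / q) * (A / B) ^ (1 / p)) ∧
    (((A < B ∧ ∃ x₀ ∈ Ω, ∀ x ∈ closure Ω, u x ≤ u x₀) ∨
        (B < A ∧ ∃ x₀ ∈ Ω, ∀ x ∈ closure Ω, u x₀ ≤ u x)) →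
      (∫ y in Ω, Real.exp (p * u y)) ^ (1 / p) * (∫ y in Ω, Real.exp (-q * u y)) ^ (1 / q)
        ≤ (volume Ω).toReal ^ (1 / p + 1 / q) * max ((B / A) ^ (1 / q)) ((A / B) ^ (1 / p))) := by
  have part1 : (A < B ∧ ∃ x₀ ∈ Ω, ∀ x ∈ closure Ω, u x ≤ u x₀) →
      A - B ≤ sSup (nonlocalW N A B p q Ω u '' closure Ω) ∧
      sSup (nonlocalW N A B p q Ω u '' closure Ω) ≤ 0 ∧
      (∫ y in Ω, Real.exp (p * u y)) ^ (1 / p) * (∫ y in Ω, Real.exp (-q * u y)) ^ (1 / q)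
        ≤ (volume Ω).toReal ^ (1 / p + 1 / q) * (B / A) ^ (1 / q) := by
    rintro ⟨hAB, x₀, hx₀, hmax⟩
    obtain ⟨hmono, h1, h2, h3⟩ :=
      mainMax hΩo hΩb hA hB hp hq hg hgpos hu_c2 hint_p hint_q heq hx₀ hmax
    have hx₀c : x₀ ∈ closure Ω := subset_closure hx₀
    have hmem : nonlocalW N A B p q Ω u x₀ ∈ nonlocalW N A B p q Ω u '' closure Ω :=
      ⟨x₀, hx₀c, rfl⟩
    have hbdd : BddAbove (nonlocalW N A B p q Ω u '' closure Ω) := by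
      refine ⟨nonlocalW N A B p q Ω u x₀, ?_⟩
      rintro _ ⟨x, hx, rfl⟩
      exact hmono x hx
    refine ⟨h1.trans (le_csSup hbdd hmem), csSup_le ⟨_, hmem⟩ ?_, h3⟩
    rintro _ ⟨x, hx, rfl⟩
    exact (hmono x hx).trans h2
  have part2 : (B < A ∧ ∃ x₀ ∈ Ω, ∀ x ∈ closure Ω, u x₀ ≤ u x) →
      0 ≤ sInf (nonlocalW N A B p q Ω u '' closure Ω) ∧
      sInf (nonlocalW N A B p q Ω u '' closure Ω) ≤ A - B ∧
      (∫ y in Ω, Real.exp (p * u y)) ^ (1 / p) * (∫ y in Ω, Real.exp (-q * u y)) ^ (1 / q)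
        ≤ (volume Ω).toReal ^ (1 / p + 1 / q) * (A / B) ^ (1 / p) := by
    rintro ⟨hBA, x₀, hx₀, hmin⟩
    have hu_c2' : ContDiffOn ℝ 2 (fun y => -u y) Ω := hu_c2.neg
    have hip' : IntegrableOn (fun y => Real.exp (q * -u y)) Ω volume := by
      simpa only [mul_neg, neg_mul] using hint_q
    have hiq' : IntegrableOn (fun y => Real.exp (-p * -u y)) Ω volume := by
      simpa only [neg_mul, mul_neg, neg_neg] using hint_p
    have heq' : ∀ x ∈ Ω, ε ^ 2 * divGGrad N g (fun y => -u y) x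
        = nonlocalW N B A q p Ω (fun y => -u y) x := by
      intro x hx
      rw [divGGrad_neg, nonlocalW_neg, mul_neg, heq x hx]
    have hmax' : ∀ x ∈ closure Ω, (fun y => -u y) x ≤ (fun y => -u y) x₀ :=
      fun x hx => neg_le_neg (hmin x hx)
    obtain ⟨hmono', h1', h2', h3'⟩ :=
      mainMax hΩo hΩb hB hA hq hp hg hgpos hu_c2' hip' hiq' heq' hx₀ hmax'
    simp only [nonlocalW_neg] at hmono' h1' h2'
    simp only [mul_neg, neg_mul, neg_neg] at h3'
    have hmono2 : ∀ x ∈ closure Ω,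
        nonlocalW N A B p q Ω u x₀ ≤ nonlocalW N A B p q Ω u x := by
      intro x hx
      have := hmono' x hx
      linarith
    have hx₀c : x₀ ∈ closure Ω := subset_closure hx₀
    have hmem : nonlocalW N A B p q Ω u x₀ ∈ nonlocalW N A B p q Ω u '' closure Ω :=
      ⟨x₀, hx₀c, rfl⟩
    have hbdd : BddBelow (nonlocalW N A B p q Ω u '' closure Ω) := by
      refine ⟨nonlocalW N A B p q Ω u x₀, ?_⟩
      rintro _ ⟨x, hx, rfl⟩
      exact hmono2 x hx
    refine ⟨le_csInf ⟨_, hmem⟩ ?_, (csInf_le hbdd hmem).trans (by linarith), ?_⟩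
    · rintro _ ⟨x, hx, rfl⟩
      have := hmono2 x hx
      linarith
    · rw [mul_comm ((∫ y in Ω, Real.exp (p * u y)) ^ (1 / p)),
        add_comm (1/p) (1/q)]
      convert h3' using 4 <;> simp [neg_mul]
  refine ⟨part1, part2, ?_⟩
  rintro (h | h)
  · exact ((part1 h).2.2).trans (mul_le_mul_of_nonneg_left (le_max_left _ _) (by positivity))
  · exact ((part2 h).2.2).trans (mul_le_mul_of_nonneg_left (le_max_right _ _) (by positivity))
end
end

section
/- Let Ω ⊆ ℝ^N be a measurable set with 0 < |Ω| < ∞, let A, B, p, q be positive real constants, and let u : Ω → ℝ be measurable with e^{pu} and e^{-qu} integrable on Ω and satisfying the inverse Hölder bound ‖e^{u}‖_{L^p(Ω)} · ‖e^{-u}‖_{L^q(Ω)} ≤ |Ω|^{1/p + 1/q} (B/A)^{1/q}. Define w(x) := A e^{p u(x)} / (|Ω|⁻¹ ∫_Ω e^{p u(y)} dy) − B e^{-q u(x)} / (|Ω|⁻¹ ∫_Ω e^{-q u(y)} dy). If x₀ ∈ Ω satisfies u(x) ≤ u(x₀) for all x ∈ Ω, then for every x ∈ Ω one has w(x₀)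 − w(x) ≥ A (p+q) (q/p)^{(p−q)/(p+q)} (u(x₀) − u(x)). -/
/-!
Put `a = A|Ω| / ∫_Ω e^{pu}` and `b = B|Ω| / ∫_Ω e^{-qu}`, so that `w = f ∘ u` with
`f τ = a e^{pτ} - b e^{-qτ}`. Weighted AM–GM with weights `q/(p+q)`, `p/(p+q)` bounds
`f' τ = a p e^{pτ} + b q e^{-qτ}` from below by `(p+q)(q/p)^{(p-q)/(p+q)} a^{q/(p+q)} b^{p/(p+q)}`,
where the exponentials cancel. The inverse Hölder bound says precisely that
`A ≤ a^{q/(p+q)} b^{p/(p+q)}`, and the mean value theorem between `u x` and `u x₀` concludes.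
-/

open Real MeasureTheory Set Filter Topology

noncomputable section

theorem nonlocalW_eq (N : ℕ) (A B p q : ℝ) (Ω : Set (EuclideanSpace ℝ (Fin N)))
    (u : EuclideanSpace ℝ (Fin N) → ℝ) (x : EuclideanSpace ℝ (Fin N)) :
    nonlocalW N A B p q Ω u x =
      A * (volume Ω).toReal / (∫ y in Ω, exp (p * u y)) * exp (p * u x)
        - B * (volume Ω).toReal / (∫ y in Ω, exp (-q * u y)) * exp (-q * u x) := by
  simp only [nonlocalW, div_eq_mul_inv, mul_inv, inv_inv]
  ring

theorem geom_mean_le_mul_exp_add_mul_exp {a b p q : ℝ} (ha : 0 < a) (hb : 0 < b) (hp : 0 < p)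
    (hq : 0 < q) (τ : ℝ) :
    (p + q) * (q / p) ^ ((p - q) / (p + q)) * (a ^ (q / (p + q)) * b ^ (p / (p + q)))
      ≤ a * p * exp (p * τ) + b * q * exp (-q * τ) := by
  have hpq : 0 < p + q := by positivity
  have hw : q / (p + q) + p / (p + q) = 1 := by rw [← add_div, add_comm, div_self hpq.ne']
  have hX : a * p * exp (p * τ) = q / (p + q) * (a * ((p + q) * (q / p)⁻¹) * exp (p * τ)) := by
    field_simp
  have hY : b * q * exp (-q * τ) = p / (p + q) * (b * ((p + q) * (q / p)) * exp (-q * τ)) := by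
    field_simp
  have hexp : exp (p * τ) ^ (q / (p + q)) * exp (-q * τ) ^ (p / (p + q)) = 1 := by
    rw [← exp_mul, ← exp_mul, ← exp_add]; field_simp; simp
  have hconst : ((p + q) * (q / p)⁻¹) ^ (q / (p + q)) * ((p + q) * (q / p)) ^ (p / (p + q))
      = (p + q) * (q / p) ^ ((p - q) / (p + q)) := by
    rw [mul_rpow hpq.le (by positivity), mul_rpow hpq.le (by positivity), inv_rpow (by positivity),
      ← rpow_neg (by positivity)]
    calc _ = (p + q) ^ (q / (p + q) + p / (p + q)) * (q / p) ^ (-(q / (p + q)) + p / (p + q)) := by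
          rw [rpow_add hpq, rpow_add (by positivity)]; ring
      _ = _ := by rw [hw, rpow_one]; congr 2; ring
  rw [hX, hY]
  refine le_trans (le_of_eq ?_) (geom_mean_le_arith_mean2_weighted (by positivity) (by positivity)
    (by positivity) (by positivity) hw)
  rw [mul_rpow (by positivity) (exp_pos _).le, mul_rpow ha.le (by positivity),
    mul_rpow (by positivity) (exp_pos _).le, mul_rpow hb.le (by positivity), ← hconst]
  linear_combination -(a ^ (q / (p + q)) * b ^ (p / (p + q)) * ((p + q) * (q / p)⁻¹) ^ (q / (p + q))
    * ((p + q) * (q / p)) ^ (p / (p + q))) * hexp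

theorem le_rpow_mul_rpow_of_inverse_holder {A B V I J p q : ℝ} (hA : 0 < A) (hB : 0 < B)
    (hV : 0 < V) (hI : 0 < I) (hJ : 0 < J) (hp : 0 < p) (hq : 0 < q)
    (h : I ^ (1 / p) * J ^ (1 / q) ≤ V ^ (1 / p + 1 / q) * (B / A) ^ (1 / q)) :
    A ≤ (A * V / I) ^ (q / (p + q)) * (B * V / J) ^ (p / (p + q)) := by
  have hlog := log_le_log (by positivity) h
  rw [log_mul (by positivity) (by positivity), log_mul (by positivity) (by positivity),
    log_rpow hI, log_rpow hJ, log_rpow hV, log_rpow (by positivity), log_div hB.ne' hA.ne'] at hlog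
  rw [← log_le_log_iff hA (by positivity), log_mul (by positivity) (by positivity),
    log_rpow (by positivity), log_rpow (by positivity), log_div (by positivity) hI.ne',
    log_div (by positivity) hJ.ne', log_mul hA.ne' hV.ne', log_mul hB.ne' hV.ne']
  field_simp at hlog ⊢
  linarith

theorem mul_sub_le_exp_sub_exp {a b p q C : ℝ}
    (hC : ∀ τ, C ≤ a * p * exp (p * τ) + b * q * exp (-q * τ)) {t s : ℝ} (hts : t ≤ s) :
    C * (s - t) ≤ (a * exp (p * s) - b * exp (-q * s)) - (a * exp (p * t) - b * exp (-q * t)) := by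
  have hderiv : ∀ τ, HasDerivAt (fun τ => a * exp (p * τ) - b * exp (-q * τ))
      (a * p * exp (p * τ) + b * q * exp (-q * τ)) τ := by
    intro τ
    have hexp (c : ℝ) : HasDerivAt (fun τ => exp (c * τ)) (exp (c * τ) * c) τ :=
      ((hasDerivAt_id τ).const_mul c).exp.congr_deriv (by simp)
    exact (((hexp p).const_mul a).sub ((hexp (-q)).const_mul b)).congr_deriv (by ring)
  exact mul_sub_le_image_sub_of_le_deriv (fun τ => (hderiv τ).differentiableAt)
    (fun τ => (hderiv τ).deriv ▸ hC τ) hts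

theorem stmt1_general {N : ℕ} (Ω : Set (EuclideanSpace ℝ (Fin N)))
    (hΩpos : 0 < volume Ω) (hΩfin : volume Ω ≠ ⊤)
    (A B p q : ℝ) (hA : 0 < A) (hB : 0 < B) (hp : 0 < p) (hq : 0 < q)
    (u : EuclideanSpace ℝ (Fin N) → ℝ)
    (hint_p : IntegrableOn (fun y => Real.exp (p * u y)) Ω)
    (hint_q : IntegrableOn (fun y => Real.exp (-q * u y)) Ω)
    (hholder :
      (∫ y in Ω, Real.exp (p * u y)) ^ (1 / p) * (∫ y in Ω, Real.exp (-q * u y)) ^ (1 / q)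
        ≤ (volume Ω).toReal ^ (1 / p + 1 / q) * (B / A) ^ (1 / q))
    (x₀ : EuclideanSpace ℝ (Fin N))
    (hmax : ∀ x ∈ Ω, u x ≤ u x₀) :
    ∀ x ∈ Ω,
      A * (p + q) * (q / p) ^ ((p - q) / (p + q)) * (u x₀ - u x)
        ≤ nonlocalW N A B p q Ω u x₀ - nonlocalW N A B p q Ω u x := by
  intro x hx
  have : NeZero (volume.restrict Ω) := ⟨by simpa [Measure.restrict_eq_zero] using hΩpos.ne'⟩
  have hV : 0 < (volume Ω).toReal := ENNReal.toReal_pos hΩpos.ne' hΩfin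
  have hIp : 0 < ∫ y in Ω, exp (p * u y) := integral_exp_pos hint_p
  have hIq : 0 < ∫ y in Ω, exp (-q * u y) := integral_exp_pos hint_q
  have hA_le := le_rpow_mul_rpow_of_inverse_holder hA hB hV hIp hIq hp hq hholder
  rw [nonlocalW_eq, nonlocalW_eq]
  set C := (p + q) * (q / p) ^ ((p - q) / (p + q))
  calc A * (p + q) * (q / p) ^ ((p - q) / (p + q)) * (u x₀ - u x)
      = C * A * (u x₀ - u x) := by ring
    _ ≤ C * ((A * (volume Ω).toReal / ∫ y in Ω, exp (p * u y)) ^ (q / (p + q))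
          * (B * (volume Ω).toReal / ∫ y in Ω, exp (-q * u y)) ^ (p / (p + q))) * (u x₀ - u x) := by
        have := sub_nonneg.2 (hmax x hx)
        gcongr
    _ ≤ _ := mul_sub_le_exp_sub_exp
        (geom_mean_le_mul_exp_add_mul_exp (by positivity) (by positivity) hp hq) (hmax x hx)

/-- A pointwise comparison inequality for the non-local nonlinearity `w` under the
inverse Hölder bound `‖e^u‖_{L^p(Ω)} ‖e^{-u}‖_{L^q(Ω)} ≤ |Ω|^{1/p+1/q} (B/A)^{1/q}`:
if `u` attains its supremum over `Ω` at `x₀ ∈ Ω`, then for every `x ∈ Ω`,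
`w(x₀) − w(x) ≥ A(p+q)(q/p)^{(p−q)/(p+q)} (u(x₀) − u(x))`. -/
theorem stmt1 {N : ℕ} (Ω : Set (EuclideanSpace ℝ (Fin N))) (hΩm : MeasurableSet Ω)
    (hΩpos : 0 < volume Ω) (hΩfin : volume Ω ≠ ⊤)
    (A B p q : ℝ) (hA : 0 < A) (hB : 0 < B) (hp : 0 < p) (hq : 0 < q)
    (u : EuclideanSpace ℝ (Fin N) → ℝ)
    (hu_meas : AEMeasurable u (volume.restrict Ω))
    (hint_p : IntegrableOn (fun y => Real.exp (p * u y)) Ω)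
    (hint_q : IntegrableOn (fun y => Real.exp (-q * u y)) Ω)
    (hholder :
      (∫ y in Ω, Real.exp (p * u y)) ^ (1 / p) * (∫ y in Ω, Real.exp (-q * u y)) ^ (1 / q)
        ≤ (volume Ω).toReal ^ (1 / p + 1 / q) * (B / A) ^ (1 / q))
    (x₀ : EuclideanSpace ℝ (Fin N)) (hx₀ : x₀ ∈ Ω)
    (hmax : ∀ x ∈ Ω, u x ≤ u x₀) :
    ∀ x ∈ Ω,
      A * (p + q) * (q / p) ^ ((p - q) / (p + q)) * (u x₀ - u x)
        ≤ nonlocalW N A B p q Ω u x₀ - nonlocalW N A B p q Ω u x :=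
  stmt1_general Ω hΩpos hΩfin A B p q hA hB hp hq u hint_p hint_q hholder x₀ hmax
end
end

section
/- Assume A ≠ B and let U_ε be a solution of problem (N*) for some ε > 0. Then: (i) R^N/N ≤ ∫₀^R s^{N−1} e^{p U_ε(s)} ds ≤ (R^N/N) · max{A/B, (B/A)^{p/q}}; (ii) R^N/N ≤ ∫₀^R s^{N−1} e^{-q U_ε(s)} ds ≤ (R^N/N) · max{B/A, (A/B)^{q/p}}; (iii) for every r ∈ [0,R], p A e^{p U_ε(r)} / ∫₀^R s^{N−1} e^{p U_ε(s)} ds + q B e^{-q U_ε(r)} / ∫₀^R s^{N−1} e^{-q U_ε(s)} ds ≥ N (p+q) min{A,B} R^{−N} (q/p)^{(p−q)/(p+q)}. -/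
open Real MeasureTheory Set Filter Topology

noncomputable section

/-- The non-local coefficient `∫₀^R s^(N-1) exp (c * U s) ds`. -/
def intExp (N : ℕ) (R c : ℝ) (U : ℝ → ℝ) : ℝ :=
  ∫ s in (0:ℝ)..R, s ^ (N - 1) * Real.exp (c * U s)

/-- The net charge density `ρ_ε`. -/
def rho (N : ℕ) (R A B p q : ℝ) (U : ℝ → ℝ) (r : ℝ) : ℝ :=
  -(R ^ N / (N : ℝ)) * (A * Real.exp (p * U r) / intExp N R p U
      - B * Real.exp (-q * U r) / intExp N R (-q) U)

/-- Problem (N*): `U` is `C¹` on `[0,R]`, `C^∞` on `(0,R)`, satisfies the non-local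
radially symmetric CCPB equation, the zero-average constraint, and the Neumann-type
boundary conditions. -/
structure IsSolNStar (N : ℕ) (R A B p q : ℝ) (g : ℝ → ℝ) (ε : ℝ) (U : ℝ → ℝ) : Prop where
  contDiffOn_one : ContDiffOn ℝ 1 U (Icc 0 R)
  contDiffOn_top : ContDiffOn ℝ (⊤ : ℕ∞) U (Ioo 0 R)
  eqn : ∀ r ∈ Ioo (0:ℝ) R,
    ε ^ 2 * g r *
        (deriv (deriv U) r + (((N : ℝ) - 1) / r + deriv g r / g r) * deriv U r)
      = R ^ N / (N : ℝ) *
          (A * Real.exp (p * U r) / intExp N R p U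
            - B * Real.exp (-q * U r) / intExp N R (-q) U)
  avg : (∫ s in (0:ℝ)..R, s ^ (N - 1) * U s) = 0
  bc0 : deriv U 0 = 0
  bcR : deriv U R = R * (A - B) / (ε ^ 2 * (N : ℝ) * g R)

lemma integral_pow_aux {N : ℕ} (hN : 2 ≤ N) (R : ℝ) :
    (∫ s in (0:ℝ)..R, s ^ (N - 1)) = R ^ N / N := by
  rw [integral_pow, show N - 1 + 1 = N from by omega, zero_pow (by omega : N ≠ 0),
    Nat.cast_sub (by omega : 1 ≤ N)]
  ring_nf

lemma integrand_contOn {N : ℕ} {R : ℝ} {U : ℝ → ℝ} (hUc : ContinuousOn U (Icc 0 R)) (c : ℝ) :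
    ContinuousOn (fun s => s ^ (N - 1) * Real.exp (c * U s)) (Icc 0 R) :=
  (continuous_pow _).continuousOn.mul
    (Real.continuous_exp.comp_continuousOn (continuousOn_const.mul hUc))

lemma integrand_ii {N : ℕ} {R : ℝ} (hR : 0 < R) {U : ℝ → ℝ}
    (hUc : ContinuousOn U (Icc 0 R)) (c : ℝ) :
    IntervalIntegrable (fun s => s ^ (N - 1) * Real.exp (c * U s)) volume 0 R := by
  have h := integrand_contOn (N := N) hUc c
  rw [← uIcc_of_le hR.le] at h
  exact h.intervalIntegrable

lemma integrandU_ii {N : ℕ} {R : ℝ} (hR : 0 < R) {U : ℝ → ℝ}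
    (hUc : ContinuousOn U (Icc 0 R)) :
    IntervalIntegrable (fun s => s ^ (N - 1) * U s) volume 0 R := by
  have h : ContinuousOn (fun s => s ^ (N - 1) * U s) (Icc 0 R) :=
    (continuous_pow _).continuousOn.mul hUc
  rw [← uIcc_of_le hR.le] at h
  exact h.intervalIntegrable

lemma intExp_pos {N : ℕ} {R : ℝ} (hR : 0 < R) {U : ℝ → ℝ}
    (hUc : ContinuousOn U (Icc 0 R)) (c : ℝ) : 0 < intExp N R c U := by
  apply intervalIntegral.intervalIntegral_pos_of_pos_on (integrand_ii hR hUc c)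
  · intro x hx
    have : 0 < x := hx.1
    positivity
  · exact hR

lemma intExp_ge {N : ℕ} (hN : 2 ≤ N) {R : ℝ} (hR : 0 < R) {U : ℝ → ℝ}
    (hUc : ContinuousOn U (Icc 0 R))
    (havg : (∫ s in (0:ℝ)..R, s ^ (N - 1) * U s) = 0) (c : ℝ) :
    R ^ N / N ≤ intExp N R c U := by
  have key : (∫ s in (0:ℝ)..R, (s ^ (N - 1) + c * (s ^ (N - 1) * U s)))
      ≤ intExp N R c U := by
    apply intervalIntegral.integral_mono_on hR.le
      (((continuous_pow _).intervalIntegrable 0 R).add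
        ((integrandU_ii hR hUc).const_mul c)) (integrand_ii hR hUc c)
    intro s hs
    have h1 := Real.add_one_le_exp (c * U s)
    have h2 : (0:ℝ) ≤ s ^ (N - 1) := pow_nonneg hs.1 _
    nlinarith [mul_le_mul_of_nonneg_left h1 h2]
  rw [intervalIntegral.integral_add ((continuous_pow _).intervalIntegrable 0 R)
    ((integrandU_ii hR hUc).const_mul c), intervalIntegral.integral_const_mul,
    havg, integral_pow_aux hN R] at key
  simpa using key

lemma intExp_le {N : ℕ} (hN : 2 ≤ N) {R : ℝ} (hR : 0 < R) {U : ℝ → ℝ}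
    (hUc : ContinuousOn U (Icc 0 R)) {c K : ℝ} (hK : ∀ s ∈ Icc (0:ℝ) R, c * U s ≤ K) :
    intExp N R c U ≤ R ^ N / N * Real.exp K := by
  have key : intExp N R c U ≤ ∫ s in (0:ℝ)..R, s ^ (N - 1) * Real.exp K := by
    apply intervalIntegral.integral_mono_on hR.le (integrand_ii hR hUc c)
      (((continuous_pow _).mul continuous_const).intervalIntegrable 0 R)
    intro s hs
    exact mul_le_mul_of_nonneg_left (Real.exp_le_exp.2 (hK s hs)) (pow_nonneg hs.1 _)
  rwa [intervalIntegral.integral_mul_const, integral_pow_aux hN R] at key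

lemma intExp_neg_comp (N : ℕ) (R c : ℝ) (U : ℝ → ℝ) :
    intExp N R c (fun r => -U r) = intExp N R (-c) U := by
  unfold intExp
  simp only [mul_neg, neg_mul]

lemma IsSolNStar.neg {N : ℕ} {R A B p q : ℝ} {g : ℝ → ℝ} {ε : ℝ} {U : ℝ → ℝ}
    (hU : IsSolNStar N R A B p q g ε U) :
    IsSolNStar N R B A q p g ε (fun r => -U r) := by
  have hdV : deriv (fun r => -U r) = fun x => -deriv U x := funext fun x => deriv.neg
  constructor
  · exact hU.contDiffOn_one.neg
  · exact hU.contDiffOn_top.neg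
  · intro r hr
    have heq := hU.eqn r hr
    rw [hdV]
    have hdd : deriv (fun x => -deriv U x) r = -deriv (deriv U) r := deriv.neg
    rw [hdd, intExp_neg_comp, intExp_neg_comp, neg_neg]
    simp only [neg_mul, mul_neg, neg_neg] at heq ⊢
    linarith [heq]
  · have : (∫ s in (0:ℝ)..R, s ^ (N - 1) * -U s)
        = -∫ s in (0:ℝ)..R, s ^ (N - 1) * U s := by
      simp only [mul_neg]
      exact intervalIntegral.integral_neg
    rw [this, hU.avg, neg_zero]
  · rw [hdV]; show -deriv U 0 = 0; rw [hU.bc0, neg_zero]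
  · rw [hdV]; show -deriv U R = _; rw [hU.bcR]; ring

lemma keyMax {N : ℕ} (hN : 2 ≤ N) {R A B p q : ℝ} (hR : 0 < R)
    (hA : 0 < A) (hB : 0 < B) (hp : 0 < p) (hq : 0 < q)
    (g : ℝ → ℝ) (hg : ContDiff ℝ (⊤ : ℕ∞) g) (hgpos : ∀ r ∈ Icc (0:ℝ) R, 0 < g r)
    (ε : ℝ) (hε : 0 < ε) (U : ℝ → ℝ) (hU : IsSolNStar N R A B p q g ε U)
    (hABlt : A < B) {M : ℝ}
    (hMmem : ∃ r ∈ Icc (0:ℝ) R, U r = M)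
    (hM : ∀ r ∈ Icc (0:ℝ) R, U r ≤ M) :
    A * Real.exp (p * M) / intExp N R p U ≤ B * Real.exp (-q * M) / intExp N R (-q) U := by
  by_contra hcon
  push_neg at hcon
  have hNpos : (0:ℝ) < N := by positivity
  have hUc : ContinuousOn U (Icc 0 R) := hU.contDiffOn_one.continuousOn
  set Ip := intExp N R p U with hIp
  set Iq := intExp N R (-q) U with hIq
  set F : ℝ → ℝ := fun r => R ^ N / (N : ℝ) *
      (A * Real.exp (p * U r) / Ip - B * Real.exp (-q * U r) / Iq) with hFdef
  have hFc : ContinuousOn F (Icc 0 R) := by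
    apply continuousOn_const.mul
    apply ContinuousOn.sub
    · exact (continuousOn_const.mul
        (Real.continuous_exp.comp_continuousOn (continuousOn_const.mul hUc))).div_const _
    · exact (continuousOn_const.mul
        (Real.continuous_exp.comp_continuousOn (continuousOn_const.mul hUc))).div_const _
  -- The largest maximizer r₀
  set S : Set ℝ := Icc (0:ℝ) R ∩ U ⁻¹' {M} with hSdef
  have hSc : IsClosed S := hUc.preimage_isClosed_of_isClosed isClosed_Icc isClosed_singleton
  have hSne : S.Nonempty := by
    obtain ⟨r, hr, hrM⟩ := hMmem
    exact ⟨r, hr, hrM⟩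
  have hSbdd : BddAbove S := BddAbove.mono (fun x hx => hx.1) bddAbove_Icc
  set r₀ : ℝ := sSup S with hr₀def
  have hr₀S : r₀ ∈ S := hSc.csSup_mem hSne hSbdd
  have hr₀mem : r₀ ∈ Icc (0:ℝ) R := hr₀S.1
  have hUr₀ : U r₀ = M := hr₀S.2
  -- rule out r₀ = R, in fact show U r < M fails at no point but R is not a maximizer
  have hgR : 0 < g R := hgpos R ⟨hR.le, le_rfl⟩
  have hUR_lt : ∃ r ∈ Icc (0:ℝ) R, U R < U r := by
    have hdneg : deriv U R < 0 := by
      rw [hU.bcR]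
      apply div_neg_of_neg_of_pos
      · nlinarith
      · positivity
    have hdiff : DifferentiableAt ℝ U R := differentiableAt_of_deriv_ne_zero hdneg.ne
    have hslope : Tendsto (slope U R) (𝓝[≠] R) (𝓝 (deriv U R)) :=
      hasDerivAt_iff_tendsto_slope.1 hdiff.hasDerivAt
    have hslope' : Tendsto (slope U R) (𝓝[<] R) (𝓝 (deriv U R)) :=
      hslope.mono_left (nhdsWithin_mono _ (fun x hx => ne_of_lt hx))
    have hev1 : ∀ᶠ r in 𝓝[<] R, slope U R r < 0 :=
      hslope'.eventually (eventually_lt_nhds hdneg)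
    have hev2 : Ioo (0:ℝ) R ∈ 𝓝[<] R := Ioo_mem_nhdsLT_of_mem ⟨hR, le_rfl⟩
    obtain ⟨r, hr1, hr2⟩ := (hev1.and (eventually_of_mem hev2 (fun x hx => hx))).exists
    refine ⟨r, ⟨hr2.1.le, hr2.2.le⟩, ?_⟩
    have hrR : r - R < 0 := by linarith [hr2.2]
    have : slope U R r = (U r - U R) / (r - R) := by
      rw [slope_def_field]
    rw [this] at hr1
    by_contra hge
    push_neg at hge
    have hnum : U r - U R ≤ 0 := by linarith
    have : 0 ≤ (U r - U R) / (r - R) := div_nonneg_of_nonpos hnum hrR.le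
    linarith
  have hr₀R : r₀ < R := by
    rcases lt_or_eq_of_le hr₀mem.2 with h | h
    · exact h
    · exfalso
      obtain ⟨r, hr, hlt⟩ := hUR_lt
      have : U R = M := h ▸ hUr₀
      exact absurd (hM r hr) (by rw [this] at hlt; linarith)
  -- positivity of F at r₀ and nearby
  have hFr₀ : 0 < F r₀ := by
    have hFr : F r₀ = R ^ N / (N : ℝ) *
        (A * Real.exp (p * U r₀) / Ip - B * Real.exp (-q * U r₀) / Iq) := rfl
    rw [hFr, hUr₀]
    have h2 : 0 < A * Real.exp (p * M) / Ip - B * Real.exp (-q * M) / Iq := by linarith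
    have h3 : 0 < R ^ N / (N : ℝ) := by positivity
    exact mul_pos h3 h2
  have hev : ∀ᶠ r in 𝓝[Icc (0:ℝ) R] r₀, 0 < F r :=
    (hFc r₀ hr₀mem).eventually (eventually_gt_nhds hFr₀)
  obtain ⟨ε₁, hε₁, hball⟩ := Metric.mem_nhdsWithin_iff.1 hev
  set δ : ℝ := min (ε₁ / 2) ((R - r₀) / 2) with hδdef
  have hδ : 0 < δ := by
    apply lt_min (by linarith)
    linarith
  have hr₀δR : r₀ + δ < R := by
    have : δ ≤ (R - r₀) / 2 := min_le_right _ _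
    linarith
  have hsub : Icc r₀ (r₀ + δ) ⊆ Icc (0:ℝ) R :=
    fun x hx => ⟨le_trans hr₀mem.1 hx.1, le_trans hx.2 hr₀δR.le⟩
  have hFpos : ∀ r ∈ Icc r₀ (r₀ + δ), 0 < F r := by
    intro r hr
    apply hball
    constructor
    · rw [Metric.mem_ball, Real.dist_eq, abs_lt]
      have h1 : δ ≤ ε₁ / 2 := min_le_left _ _
      constructor <;> [linarith [hr.1]; linarith [hr.2]]
    · exact hsub hr
  -- φ and its derivative
  set φ : ℝ → ℝ := fun r => r ^ (N - 1) * g r * deriv U r with hφdef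
  have hderivU2 : ContDiffOn ℝ (⊤ : ℕ∞) (deriv U) (Ioo 0 R) :=
    hU.contDiffOn_top.deriv_of_isOpen isOpen_Ioo (by simp)
  have hφd : ∀ r ∈ Ioo (0:ℝ) R, HasDerivAt φ (r ^ (N - 1) * F r / ε ^ 2) r := by
    intro r hr
    have hrpos : (0:ℝ) < r := hr.1
    have hU2 : HasDerivAt (deriv U) (deriv (deriv U) r) r :=
      (((hderivU2.differentiableOn (by simp)).differentiableAt
        (isOpen_Ioo.mem_nhds hr)).hasDerivAt)
    have hgd : HasDerivAt g (deriv g r) r := (hg.differentiable (by simp) _).hasDerivAt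
    have hpow : HasDerivAt (fun x : ℝ => x ^ (N - 1))
        ((N - 1 : ℕ) * r ^ (N - 2)) r := by
      have h22 : N - 1 - 1 = N - 2 := by omega
      simpa [h22] using hasDerivAt_pow (N - 1) r
    have hprod := (hpow.mul hgd).mul hU2
    refine HasDerivAt.congr_deriv (f := φ) hprod ?_
    symm
    simp only [Pi.mul_apply]
    have heq := hU.eqn r hr
    have hFr : F r = R ^ N / (N : ℝ) *
        (A * Real.exp (p * U r) / Ip - B * Real.exp (-q * U r) / Iq) := rfl
    have hgr : g r ≠ 0 := (hgpos r ⟨hrpos.le, hr.2.le⟩).ne'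
    have hrne : r ≠ 0 := hrpos.ne'
    have hεne : ε ≠ 0 := hε.ne'
    have hrpow : r ^ (N - 1) = r * r ^ (N - 2) := by
      rw [← pow_succ']
      congr 1
      omega
    have hcast : ((N - 1 : ℕ) : ℝ) = (N : ℝ) - 1 := by
      rw [Nat.cast_sub (by omega : 1 ≤ N)]; norm_num
    rw [hFr, ← heq, hcast, hrpow]
    field_simp
    ring
  -- φ is strictly monotone on Ioo r₀ (r₀+δ)
  have hIooSub : Ioo r₀ (r₀ + δ) ⊆ Ioo (0:ℝ) R :=
    fun x hx => ⟨lt_of_le_of_lt hr₀mem.1 hx.1, lt_of_lt_of_le hx.2 hr₀δR.le⟩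
  have hmono : StrictMonoOn φ (Ioo r₀ (r₀ + δ)) := by
    apply strictMonoOn_of_deriv_pos (convex_Ioo _ _)
    · intro b hb
      exact ((hφd b (hIooSub hb)).differentiableAt.continuousAt).continuousWithinAt
    · intro b hb
      rw [interior_Ioo] at hb
      rw [(hφd b (hIooSub hb)).deriv]
      have hb1 : 0 < b := lt_of_le_of_lt hr₀mem.1 hb.1
      have hb2 : 0 < F b := hFpos b ⟨hb.1.le, hb.2.le⟩
      positivity
  -- Tendsto φ (𝓝[>] r₀) (𝓝 0)
  have htend : Tendsto φ (𝓝[>] r₀) (𝓝 0) := by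
    rcases eq_or_lt_of_le hr₀mem.1 with h0 | h0
    · -- r₀ = 0
      set D : ℝ → ℝ := derivWithin U (Icc 0 R) with hDdef
      have hDc : ContinuousOn D (Icc 0 R) :=
        hU.contDiffOn_one.continuousOn_derivWithin (uniqueDiffOn_Icc hR) le_rfl
      have hψc : ContinuousWithinAt (fun r => r ^ (N - 1) * g r * D r) (Icc 0 R) 0 :=
        ((continuous_pow _).continuousWithinAt.mul
          hg.continuous.continuousWithinAt).mul (hDc 0 ⟨le_rfl, hR.le⟩)
      have hval : (0:ℝ) ^ (N - 1) * g 0 * D 0 = 0 := by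
        rw [zero_pow (by omega : N - 1 ≠ 0)]; ring
      have hψ : Tendsto (fun r => r ^ (N - 1) * g r * D r) (𝓝[Icc (0:ℝ) R] 0) (𝓝 0) := by
        have := hψc
        rw [ContinuousWithinAt, hval] at this
        exact this
      have hle1 : 𝓝[>] (0:ℝ) ≤ 𝓝[Ioo (0:ℝ) R] 0 :=
        nhdsWithin_le_of_mem (Ioo_mem_nhdsGT_of_mem ⟨le_rfl, hR⟩)
      have hle2 : 𝓝[Ioo (0:ℝ) R] (0:ℝ) ≤ 𝓝[Icc (0:ℝ) R] 0 :=
        nhdsWithin_mono _ Ioo_subset_Icc_self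
      have hψ' : Tendsto (fun r => r ^ (N - 1) * g r * D r) (𝓝[>] (0:ℝ)) (𝓝 0) :=
        hψ.mono_left (le_trans hle1 hle2)
      have heq' : (fun r => r ^ (N - 1) * g r * D r) =ᶠ[𝓝[>] (0:ℝ)] φ := by
        filter_upwards [Ioo_mem_nhdsGT_of_mem (⟨le_rfl, hR⟩ : (0:ℝ) ∈ Ico 0 R)] with r hr
        rw [hφdef]
        simp only
        congr 1
        rw [hDdef]
        exact derivWithin_of_mem_nhds (Icc_mem_nhds hr.1 hr.2)
      rw [← h0]
      exact hψ'.congr' heq'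
    · -- r₀ > 0
      have hd0 : deriv U r₀ = 0 := by
        have hmax : IsMaxOn U (Icc 0 R) r₀ := by
          intro x hx
          simp only [mem_setOf_eq]
          rw [hUr₀]
          exact hM x hx
        exact (hmax.isLocalMax (Icc_mem_nhds h0 hr₀R)).deriv_eq_zero
      have hφr₀ : φ r₀ = 0 := by rw [hφdef]; simp [hd0]
      have hcont : ContinuousAt φ r₀ :=
        (hφd r₀ ⟨h0, hr₀R⟩).differentiableAt.continuousAt
      have := hcont.tendsto
      rw [hφr₀] at this
      exact this.mono_left nhdsWithin_le_nhds
  -- φ nonneg then positive on Ioo r₀ (r₀+δ)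
  have hφ_nonneg : ∀ b ∈ Ioo r₀ (r₀ + δ), 0 ≤ φ b := by
    intro b hb
    have hev2 : ∀ᶠ a in 𝓝[>] r₀, φ a ≤ φ b := by
      filter_upwards [Ioo_mem_nhdsGT_of_mem (⟨le_rfl, hb.1⟩ : r₀ ∈ Ico r₀ b)] with a ha
      exact (hmono ⟨ha.1, lt_trans ha.2 hb.2⟩ hb ha.2).le
    exact le_of_tendsto htend hev2
  have hφ_pos : ∀ b ∈ Ioo r₀ (r₀ + δ), 0 < φ b := by
    intro b hb
    have hmid : (r₀ + b) / 2 ∈ Ioo r₀ (r₀ + δ) :=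
      ⟨by linarith [hb.1], by linarith [hb.1, hb.2]⟩
    exact lt_of_le_of_lt (hφ_nonneg _ hmid) (hmono hmid hb (by linarith [hb.1]))
  have hderiv_pos : ∀ b ∈ Ioo r₀ (r₀ + δ), 0 < deriv U b := by
    intro b hb
    have h1 := hφ_pos b hb
    have hbp : 0 < b := lt_of_le_of_lt hr₀mem.1 hb.1
    have h2 : 0 < b ^ (N - 1) * g b := by
      have := hgpos b (hsub ⟨hb.1.le, hb.2.le⟩)
      positivity
    rw [hφdef] at h1
    simp only at h1
    by_contra hc
    push_neg at hc
    nlinarith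
  have hUmono : StrictMonoOn U (Icc r₀ (r₀ + δ)) := by
    apply strictMonoOn_of_deriv_pos (convex_Icc _ _) (hUc.mono hsub)
    intro b hb
    rw [interior_Icc] at hb
    exact hderiv_pos b hb
  have h1 : U (r₀ + δ) ≤ M := hM _ (hsub ⟨by linarith, le_rfl⟩)
  have h2 : M < U (r₀ + δ) := by
    rw [← hUr₀]
    exact hUmono ⟨le_rfl, by linarith⟩ ⟨by linarith, le_rfl⟩ (by linarith)
  linarith

lemma amgm_aux {p q x y : ℝ} (hp : 0 < p) (hq : 0 < q) (hx : 0 < x) (hy : 0 < y) :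
    (p + q) * (q / p) ^ ((p - q) / (p + q)) * (x ^ q * y ^ p) ^ (1 / (p + q))
      ≤ p * x + q * y := by
  have hpq : 0 < p + q := by linarith
  have h := Real.geom_mean_le_arith_mean2_weighted
    (w₁ := q / (p + q)) (w₂ := p / (p + q)) (p₁ := p * x / q) (p₂ := q * y / p)
    (by positivity) (by positivity) (by positivity) (by positivity) (by field_simp; ring)
  have key : (p * x / q) ^ (q / (p + q)) * (q * y / p) ^ (p / (p + q))
      = (q / p) ^ ((p - q) / (p + q)) * (x ^ q * y ^ p) ^ (1 / (p + q)) := by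
    have h1 : (0:ℝ) < p * x / q := by positivity
    have h2 : (0:ℝ) < q * y / p := by positivity
    have h3 : (0:ℝ) < q / p := by positivity
    have h4 : (0:ℝ) < x ^ q * y ^ p := by positivity
    have hl : (0:ℝ) < (p * x / q) ^ (q / (p + q)) * (q * y / p) ^ (p / (p + q)) := by
      positivity
    have hr : (0:ℝ) < (q / p) ^ ((p - q) / (p + q)) * (x ^ q * y ^ p) ^ (1 / (p + q)) := by
      positivity
    rw [← Real.exp_log hl, ← Real.exp_log hr]
    congr 1
    rw [Real.log_mul (by positivity) (by positivity),
        Real.log_mul (by positivity) (by positivity),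
        Real.log_rpow h1, Real.log_rpow h2, Real.log_rpow h3, Real.log_rpow h4,
        Real.log_div (by positivity) hq.ne', Real.log_mul (by positivity) hx.ne',
        Real.log_div (by positivity) hp.ne', Real.log_mul (by positivity) hy.ne',
        Real.log_div hq.ne' hp.ne', Real.log_mul (by positivity) (by positivity),
        Real.log_rpow hx, Real.log_rpow hy]
    field_simp
    ring
  rw [key] at h
  have h5 := mul_le_mul_of_nonneg_left h hpq.le
  have h6 : (p + q) * (q / (p + q) * (p * x / q) + p / (p + q) * (q * y / p))
      = p * x + q * y := by field_simp
  rw [h6] at h5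
  have h7 : (p + q) * (q / p) ^ ((p - q) / (p + q)) * (x ^ q * y ^ p) ^ (1 / (p + q))
      = (p + q) * ((q / p) ^ ((p - q) / (p + q)) * (x ^ q * y ^ p) ^ (1 / (p + q))) := by
    ring
  rw [h7]
  exact h5

lemma part3_core {p q K x y : ℝ} (hp : 0 < p) (hq : 0 < q) (hx : 0 < x) (hy : 0 < y)
    (hK : 0 < K) (hkey : K ^ (p + q) ≤ x ^ q * y ^ p) :
    (p + q) * K * (q / p) ^ ((p - q) / (p + q)) ≤ p * x + q * y := by
  have hpq : (0:ℝ) < p + q := by linarith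
  have h1 := amgm_aux hp hq hx hy
  have h2 : K ≤ (x ^ q * y ^ p) ^ (1 / (p + q)) := by
    have h3 : (K ^ (p + q)) ^ (1 / (p + q)) ≤ (x ^ q * y ^ p) ^ (1 / (p + q)) :=
      Real.rpow_le_rpow (by positivity) hkey (by positivity)
    rwa [← Real.rpow_mul hK.le, mul_one_div_cancel hpq.ne', Real.rpow_one] at h3
  have h4 := mul_le_mul_of_nonneg_left h2
    (by positivity : (0:ℝ) ≤ (p + q) * (q / p) ^ ((p - q) / (p + q)))
  linarith [h1, h4]

lemma prod_bound_aux {p q c1 c2 E1 E2 RN Ip Iq : ℝ} (hp : 0 < p) (hq : 0 < q)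
    (hc1 : 0 < c1) (hc2 : 0 < c2) (hE1 : 0 < E1) (hE2 : 0 < E2) (hRN : 0 < RN)
    (hIp : 0 < Ip) (hIq : 0 < Iq)
    (h1 : Ip ≤ c1 * RN * E1) (h2 : Iq ≤ c2 * RN * E2) (hE : E1 ^ q * E2 ^ p = 1) :
    Ip ^ q * Iq ^ p ≤ c1 ^ q * c2 ^ p * RN ^ (p + q) := by
  have b1 : Ip ^ q ≤ (c1 * RN * E1) ^ q := Real.rpow_le_rpow hIp.le h1 hq.le
  have b2 : Iq ^ p ≤ (c2 * RN * E2) ^ p := Real.rpow_le_rpow hIq.le h2 hp.le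
  have b3 : Ip ^ q * Iq ^ p ≤ (c1 * RN * E1) ^ q * (c2 * RN * E2) ^ p :=
    mul_le_mul b1 b2 (by positivity) (by positivity)
  have e1 : (c1 * RN * E1) ^ q = c1 ^ q * RN ^ q * E1 ^ q := by
    rw [Real.mul_rpow (by positivity) hE1.le, Real.mul_rpow hc1.le hRN.le]
  have e2 : (c2 * RN * E2) ^ p = c2 ^ p * RN ^ p * E2 ^ p := by
    rw [Real.mul_rpow (by positivity) hE2.le, Real.mul_rpow hc2.le hRN.le]
  have e3 : RN ^ q * RN ^ p = RN ^ (p + q) := by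
    rw [← Real.rpow_add hRN, add_comm]
  calc Ip ^ q * Iq ^ p ≤ (c1 * RN * E1) ^ q * (c2 * RN * E2) ^ p := b3
    _ = c1 ^ q * c2 ^ p * (RN ^ q * RN ^ p) * (E1 ^ q * E2 ^ p) := by rw [e1, e2]; ring
    _ = c1 ^ q * c2 ^ p * RN ^ (p + q) := by rw [e3, hE, mul_one]

lemma rpow_eq_aux {A B RN p q : ℝ} (hA : 0 < A) (hB : 0 < B) (hRN : 0 < RN)
    (hp : 0 < p) (hq : 0 < q) :
    (A / RN) ^ (p + q) * ((B / A) ^ p * RN ^ (p + q)) = A ^ q * B ^ p := by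
  rw [Real.div_rpow hA.le hRN.le, Real.div_rpow hB.le hA.le, Real.rpow_add hA]
  have h1 : RN ^ (p + q) ≠ 0 := (Real.rpow_pos_of_pos hRN _).ne'
  have h2 : A ^ p ≠ 0 := (Real.rpow_pos_of_pos hA _).ne'
  field_simp

/-- Bounds on the non-local coefficients and a lower bound for the combined
nonlinearity, for a solution of problem (N*) with `A ≠ B`. -/
theorem stmt2 {N : ℕ} (hN : 2 ≤ N) {R A B p q : ℝ} (hR : 0 < R)
    (hA : 0 < A) (hB : 0 < B) (hp : 0 < p) (hq : 0 < q) (hAB : A ≠ B)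
    (g : ℝ → ℝ) (hg : ContDiff ℝ (⊤ : ℕ∞) g) (hgpos : ∀ r ∈ Icc (0:ℝ) R, 0 < g r)
    (ε : ℝ) (hε : 0 < ε) (U : ℝ → ℝ) (hU : IsSolNStar N R A B p q g ε U) :
    (R ^ N / (N : ℝ) ≤ intExp N R p U ∧
      intExp N R p U ≤ R ^ N / (N : ℝ) * max (A / B) ((B / A) ^ (p / q))) ∧
    (R ^ N / (N : ℝ) ≤ intExp N R (-q) U ∧
      intExp N R (-q) U ≤ R ^ N / (N : ℝ) * max (B / A) ((A / B) ^ (q / p))) ∧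
    (∀ r ∈ Icc (0:ℝ) R,
      (N : ℝ) * (p + q) * min A B / R ^ N * (q / p) ^ ((p - q) / (p + q)) ≤
        p * A * Real.exp (p * U r) / intExp N R p U
          + q * B * Real.exp (-q * U r) / intExp N R (-q) U) := by
  have hUc : ContinuousOn U (Icc 0 R) := hU.contDiffOn_one.continuousOn
  have hNpos : (0:ℝ) < N := by exact_mod_cast (by omega : 0 < N)
  have hRN : (0:ℝ) < R ^ N / N := by positivity
  obtain ⟨rM, hrMmem, hrMmax⟩ := isCompact_Icc.exists_isMaxOn (nonempty_Icc.2 hR.le) hUc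
  obtain ⟨rm, hrmmem, hrmmin⟩ := isCompact_Icc.exists_isMinOn (nonempty_Icc.2 hR.le) hUc
  have hMge : ∀ r ∈ Icc (0:ℝ) R, U r ≤ U rM := fun r hr => hrMmax hr
  have hmle : ∀ r ∈ Icc (0:ℝ) R, U rm ≤ U r := fun r hr => hrmmin hr
  have hm0 : U rm ≤ 0 := by
    by_contra hc
    push_neg at hc
    have hpos : 0 < ∫ s in (0:ℝ)..R, s ^ (N - 1) * U s := by
      apply intervalIntegral.intervalIntegral_pos_of_pos_on (integrandU_ii hR hUc)
      · intro s hs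
        exact mul_pos (pow_pos hs.1 _) (lt_of_lt_of_le hc (hmle s ⟨hs.1.le, hs.2.le⟩))
      · exact hR
    rw [hU.avg] at hpos
    exact lt_irrefl 0 hpos
  have hM0 : 0 ≤ U rM := by
    by_contra hc
    push_neg at hc
    have hpos : 0 < ∫ s in (0:ℝ)..R, s ^ (N - 1) * (-U s) := by
      apply intervalIntegral.intervalIntegral_pos_of_pos_on (integrandU_ii hR hUc.neg)
      · intro s hs
        have h1 : U s < 0 := lt_of_le_of_lt (hMge s ⟨hs.1.le, hs.2.le⟩) hc
        exact mul_pos (pow_pos hs.1 _) (by show (0:ℝ) < -U s; linarith)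
      · exact hR
    have hz : (∫ s in (0:ℝ)..R, s ^ (N - 1) * (-U s)) = 0 := by
      simp only [mul_neg]
      rw [intervalIntegral.integral_neg, hU.avg, neg_zero]
    rw [hz] at hpos
    exact lt_irrefl 0 hpos
  have hIppos : 0 < intExp N R p U := intExp_pos hR hUc p
  have hIqpos : 0 < intExp N R (-q) U := intExp_pos hR hUc (-q)
  have hIplow : R ^ N / (N:ℝ) ≤ intExp N R p U := intExp_ge hN hR hUc hU.avg p
  have hIqlow : R ^ N / (N:ℝ) ≤ intExp N R (-q) U := intExp_ge hN hR hUc hU.avg (-q)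
  have hIpup : intExp N R p U ≤ R ^ N / (N:ℝ) * Real.exp (p * U rM) :=
    intExp_le hN hR hUc (fun s hs => mul_le_mul_of_nonneg_left (hMge s hs) hp.le)
  have hIqup : intExp N R (-q) U ≤ R ^ N / (N:ℝ) * Real.exp (-q * U rm) :=
    intExp_le hN hR hUc (fun s hs => by
      nlinarith [hmle s hs, mul_nonneg hq.le (sub_nonneg.2 (hmle s hs))])
  have hKpos : 0 < (N:ℝ) * min A B / R ^ N :=
    div_pos (mul_pos hNpos (lt_min hA hB)) (pow_pos hR N)
  rcases hAB.lt_or_gt with hlt | hlt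
  · -- Case A < B : use the maximum
    have kM := keyMax hN hR hA hB hp hq g hg hgpos ε hε U hU hlt
      ⟨rM, hrMmem, rfl⟩ hMge
    have hk1 : A * Real.exp (p * U rM) * (intExp N R (-q) U) ≤ B * Real.exp (-q * U rM) * (intExp N R p U) :=
      (div_le_div_iff₀ hIppos hIqpos).1 kM
    have hIqB : A * (intExp N R (-q) U) ≤ B * (R ^ N / (N:ℝ)) * Real.exp (-q * U rM) := by
      have h2 : B * Real.exp (-q * U rM) * (intExp N R p U)
          ≤ B * Real.exp (-q * U rM) * (R ^ N / (N:ℝ) * Real.exp (p * U rM)) :=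
        mul_le_mul_of_nonneg_left hIpup (by positivity)
      have h3 : (A * (intExp N R (-q) U)) * Real.exp (p * U rM)
          ≤ (B * (R ^ N / (N:ℝ)) * Real.exp (-q * U rM)) * Real.exp (p * U rM) := by
        linarith [hk1, h2]
      exact le_of_mul_le_mul_right h3 (Real.exp_pos _)
    have hE2le : Real.exp (-q * U rM) ≤ 1 := by
      rw [← Real.exp_zero]
      exact Real.exp_le_exp.2 (by nlinarith [mul_nonneg hq.le hM0])
    have hIq_bd : (intExp N R (-q) U) ≤ R ^ N / (N:ℝ) * (B / A) := by
      rw [show R ^ N / (N:ℝ) * (B / A) = B * (R ^ N / (N:ℝ)) / A by ring, le_div_iff₀ hA]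
      linarith [hIqB, mul_le_mul_of_nonneg_left hE2le
        (by positivity : (0:ℝ) ≤ B * (R ^ N / (N:ℝ)))]
    have hAB_exp : A / B ≤ Real.exp (-q * U rM) := by
      rw [div_le_iff₀ hB]
      have h4 : A * (R ^ N / (N:ℝ)) ≤ A * (intExp N R (-q) U) := mul_le_mul_of_nonneg_left hIqlow hA.le
      have h5 : A * (R ^ N / (N:ℝ))
          ≤ (B * Real.exp (-q * U rM)) * (R ^ N / (N:ℝ)) := by linarith [h4, hIqB]
      have h6 := le_of_mul_le_mul_right h5 hRN
      linarith
    have hexp_pM : Real.exp (p * U rM) ≤ (B / A) ^ (p / q) := by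
      have he : Real.exp (p * U rM) = Real.exp (-q * U rM) ^ (-(p / q)) := by
        rw [← Real.exp_mul]
        congr 1
        field_simp
      have h6 : Real.exp (-q * U rM) ^ (-(p / q)) ≤ (A / B) ^ (-(p / q)) :=
        Real.rpow_le_rpow_of_nonpos (by positivity) hAB_exp
          (neg_nonpos.2 (by positivity))
      have h7 : (A / B) ^ (-(p / q)) = (B / A) ^ (p / q) := by
        rw [Real.rpow_neg (by positivity : (0:ℝ) ≤ A / B),
          ← Real.inv_rpow (by positivity : (0:ℝ) ≤ A / B), inv_div]
      rw [he]
      exact h6.trans_eq h7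
    have hIp_bd : (intExp N R p U) ≤ R ^ N / (N:ℝ) * (B / A) ^ (p / q) :=
      hIpup.trans (mul_le_mul_of_nonneg_left hexp_pM hRN.le)
    refine ⟨⟨hIplow, ?_⟩, ⟨hIqlow, ?_⟩, ?_⟩
    · exact hIp_bd.trans (mul_le_mul_of_nonneg_left (le_max_right _ _) hRN.le)
    · exact hIq_bd.trans (mul_le_mul_of_nonneg_left (le_max_left _ _) hRN.le)
    · intro r hr
      have hIqB2 : (intExp N R (-q) U) ≤ B / A * (R ^ N / (N:ℝ)) * Real.exp (-q * U rM) := by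
        rw [show B / A * (R ^ N / (N:ℝ)) * Real.exp (-q * U rM)
            = B * (R ^ N / (N:ℝ)) * Real.exp (-q * U rM) / A by ring, le_div_iff₀ hA]
        linarith [hIqB]
      have hE : Real.exp (p * U rM) ^ q * Real.exp (-q * U rM) ^ p = 1 := by
        rw [← Real.exp_mul, ← Real.exp_mul, ← Real.exp_add,
          show p * U rM * q + -q * U rM * p = 0 by ring, Real.exp_zero]
      have hprod : (intExp N R p U) ^ q * (intExp N R (-q) U) ^ p
          ≤ (1:ℝ) ^ q * (B / A) ^ p * (R ^ N / (N:ℝ)) ^ (p + q) :=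
        prod_bound_aux hp hq one_pos (by positivity) (Real.exp_pos _) (Real.exp_pos _)
          hRN hIppos hIqpos (by linarith [hIpup]) hIqB2 hE
      rw [Real.one_rpow, one_mul] at hprod
      have hxy : (A * Real.exp (p * U r) / (intExp N R p U)) ^ q * (B * Real.exp (-q * U r) / (intExp N R (-q) U)) ^ p
          = A ^ q * B ^ p / ((intExp N R p U) ^ q * (intExp N R (-q) U) ^ p) := by
        rw [Real.div_rpow (by positivity) hIppos.le, Real.div_rpow (by positivity) hIqpos.le,
          Real.mul_rpow hA.le (Real.exp_pos _).le, Real.mul_rpow hB.le (Real.exp_pos _).le,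
          ← Real.exp_mul, ← Real.exp_mul, div_mul_div_comm]
        congr 1
        rw [mul_mul_mul_comm, ← Real.exp_add,
          show p * U r * q + -q * U r * p = 0 by ring, Real.exp_zero, mul_one]
      have hkey : ((N:ℝ) * min A B / R ^ N) ^ (p + q)
          ≤ (A * Real.exp (p * U r) / (intExp N R p U)) ^ q * (B * Real.exp (-q * U r) / (intExp N R (-q) U)) ^ p := by
        have hminA : min A B = A := min_eq_left hlt.le
        have hKeq : (N:ℝ) * min A B / R ^ N = A / (R ^ N / (N:ℝ)) := by
          rw [hminA]
          field_simp
        rw [hKeq, hxy, le_div_iff₀ (mul_pos (Real.rpow_pos_of_pos hIppos q) (Real.rpow_pos_of_pos hIqpos p))]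
        calc (A / (R ^ N / (N:ℝ))) ^ (p + q) * ((intExp N R p U) ^ q * (intExp N R (-q) U) ^ p)
            ≤ (A / (R ^ N / (N:ℝ))) ^ (p + q)
              * ((B / A) ^ p * (R ^ N / (N:ℝ)) ^ (p + q)) :=
              mul_le_mul_of_nonneg_left hprod (by positivity)
          _ = A ^ q * B ^ p := rpow_eq_aux hA hB hRN hp hq
      have hfin := part3_core hp hq
        (div_pos (mul_pos hA (Real.exp_pos _)) hIppos)
        (div_pos (mul_pos hB (Real.exp_pos _)) hIqpos) hKpos hkey
      have hring : (N:ℝ) * (p + q) * min A B / R ^ N * (q / p) ^ ((p - q) / (p + q))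
          = (p + q) * ((N:ℝ) * min A B / R ^ N) * (q / p) ^ ((p - q) / (p + q)) := by ring
      rw [hring]
      refine hfin.trans_eq ?_
      ring
  · -- Case B < A : use the minimum
    have km : B * Real.exp (-q * U rm) / (intExp N R (-q) U) ≤ A * Real.exp (p * U rm) / (intExp N R p U) := by
      have h := keyMax hN hR hB hA hq hp g hg hgpos ε hε _ hU.neg hlt
        (M := -(U rm)) ⟨rm, hrmmem, rfl⟩ (fun r hr => neg_le_neg (hmle r hr))
      rw [intExp_neg_comp, intExp_neg_comp] at h
      simp only [mul_neg, neg_mul, neg_neg] at h ⊢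
      exact h
    have hk1 : B * Real.exp (-q * U rm) * (intExp N R p U) ≤ A * Real.exp (p * U rm) * (intExp N R (-q) U) :=
      (div_le_div_iff₀ hIqpos hIppos).1 km
    have hIpB : B * (intExp N R p U) ≤ A * (R ^ N / (N:ℝ)) * Real.exp (p * U rm) := by
      have h2 : A * Real.exp (p * U rm) * (intExp N R (-q) U)
          ≤ A * Real.exp (p * U rm) * (R ^ N / (N:ℝ) * Real.exp (-q * U rm)) :=
        mul_le_mul_of_nonneg_left hIqup (by positivity)
      have h3 : (B * (intExp N R p U)) * Real.exp (-q * U rm)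
          ≤ (A * (R ^ N / (N:ℝ)) * Real.exp (p * U rm)) * Real.exp (-q * U rm) := by
        linarith [hk1, h2]
      exact le_of_mul_le_mul_right h3 (Real.exp_pos _)
    have hE1le : Real.exp (p * U rm) ≤ 1 := by
      rw [← Real.exp_zero]
      exact Real.exp_le_exp.2 (by nlinarith [mul_nonneg hp.le (neg_nonneg.2 hm0)])
    have hIp_bd : (intExp N R p U) ≤ R ^ N / (N:ℝ) * (A / B) := by
      rw [show R ^ N / (N:ℝ) * (A / B) = A * (R ^ N / (N:ℝ)) / B by ring, le_div_iff₀ hB]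
      linarith [hIpB, mul_le_mul_of_nonneg_left hE1le
        (by positivity : (0:ℝ) ≤ A * (R ^ N / (N:ℝ)))]
    have hBA_exp : B / A ≤ Real.exp (p * U rm) := by
      rw [div_le_iff₀ hA]
      have h4 : B * (R ^ N / (N:ℝ)) ≤ B * (intExp N R p U) := mul_le_mul_of_nonneg_left hIplow hB.le
      have h5 : B * (R ^ N / (N:ℝ))
          ≤ (A * Real.exp (p * U rm)) * (R ^ N / (N:ℝ)) := by linarith [h4, hIpB]
      have h6 := le_of_mul_le_mul_right h5 hRN
      linarith
    have hexp_qm : Real.exp (-q * U rm) ≤ (A / B) ^ (q / p) := by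
      have he : Real.exp (-q * U rm) = Real.exp (p * U rm) ^ (-(q / p)) := by
        rw [← Real.exp_mul]
        congr 1
        field_simp
      have h6 : Real.exp (p * U rm) ^ (-(q / p)) ≤ (B / A) ^ (-(q / p)) :=
        Real.rpow_le_rpow_of_nonpos (by positivity) hBA_exp
          (neg_nonpos.2 (by positivity))
      have h7 : (B / A) ^ (-(q / p)) = (A / B) ^ (q / p) := by
        rw [Real.rpow_neg (by positivity : (0:ℝ) ≤ B / A),
          ← Real.inv_rpow (by positivity : (0:ℝ) ≤ B / A), inv_div]
      rw [he]
      exact h6.trans_eq h7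
    have hIq_bd : (intExp N R (-q) U) ≤ R ^ N / (N:ℝ) * (A / B) ^ (q / p) :=
      hIqup.trans (mul_le_mul_of_nonneg_left hexp_qm hRN.le)
    refine ⟨⟨hIplow, ?_⟩, ⟨hIqlow, ?_⟩, ?_⟩
    · exact hIp_bd.trans (mul_le_mul_of_nonneg_left (le_max_left _ _) hRN.le)
    · exact hIq_bd.trans (mul_le_mul_of_nonneg_left (le_max_right _ _) hRN.le)
    · intro r hr
      have hIpB2 : (intExp N R p U) ≤ A / B * (R ^ N / (N:ℝ)) * Real.exp (p * U rm) := by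
        rw [show A / B * (R ^ N / (N:ℝ)) * Real.exp (p * U rm)
            = A * (R ^ N / (N:ℝ)) * Real.exp (p * U rm) / B by ring, le_div_iff₀ hB]
        linarith [hIpB]
      have hE : Real.exp (p * U rm) ^ q * Real.exp (-q * U rm) ^ p = 1 := by
        rw [← Real.exp_mul, ← Real.exp_mul, ← Real.exp_add,
          show p * U rm * q + -q * U rm * p = 0 by ring, Real.exp_zero]
      have hprod : (intExp N R p U) ^ q * (intExp N R (-q) U) ^ p
          ≤ (A / B) ^ q * (1:ℝ) ^ p * (R ^ N / (N:ℝ)) ^ (p + q) :=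
        prod_bound_aux hp hq (by positivity) one_pos (Real.exp_pos _) (Real.exp_pos _)
          hRN hIppos hIqpos hIpB2 (by linarith [hIqup]) hE
      rw [Real.one_rpow, mul_one] at hprod
      have hxy : (A * Real.exp (p * U r) / (intExp N R p U)) ^ q * (B * Real.exp (-q * U r) / (intExp N R (-q) U)) ^ p
          = A ^ q * B ^ p / ((intExp N R p U) ^ q * (intExp N R (-q) U) ^ p) := by
        rw [Real.div_rpow (by positivity) hIppos.le, Real.div_rpow (by positivity) hIqpos.le,
          Real.mul_rpow hA.le (Real.exp_pos _).le, Real.mul_rpow hB.le (Real.exp_pos _).le,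
          ← Real.exp_mul, ← Real.exp_mul, div_mul_div_comm]
        congr 1
        rw [mul_mul_mul_comm, ← Real.exp_add,
          show p * U r * q + -q * U r * p = 0 by ring, Real.exp_zero, mul_one]
      have hkey : ((N:ℝ) * min A B / R ^ N) ^ (p + q)
          ≤ (A * Real.exp (p * U r) / (intExp N R p U)) ^ q * (B * Real.exp (-q * U r) / (intExp N R (-q) U)) ^ p := by
        have hminB : min A B = B := min_eq_right hlt.le
        have hKeq : (N:ℝ) * min A B / R ^ N = B / (R ^ N / (N:ℝ)) := by
          rw [hminB]
          field_simp
        have heq2 := rpow_eq_aux hB hA hRN hq hp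
        rw [add_comm q p] at heq2
        rw [hKeq, hxy, le_div_iff₀ (mul_pos (Real.rpow_pos_of_pos hIppos q) (Real.rpow_pos_of_pos hIqpos p))]
        calc (B / (R ^ N / (N:ℝ))) ^ (p + q) * ((intExp N R p U) ^ q * (intExp N R (-q) U) ^ p)
            ≤ (B / (R ^ N / (N:ℝ))) ^ (p + q)
              * ((A / B) ^ q * (R ^ N / (N:ℝ)) ^ (p + q)) :=
              mul_le_mul_of_nonneg_left hprod (by positivity)
          _ = B ^ p * A ^ q := heq2
          _ = A ^ q * B ^ p := by ring
      have hfin := part3_core hp hq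
        (div_pos (mul_pos hA (Real.exp_pos _)) hIppos)
        (div_pos (mul_pos hB (Real.exp_pos _)) hIqpos) hKpos hkey
      have hring : (N:ℝ) * (p + q) * min A B / R ^ N * (q / p) ^ ((p - q) / (p + q))
          = (p + q) * ((N:ℝ) * min A B / R ^ N) * (q / p) ^ ((p - q) / (p + q)) := by ring
      rw [hring]
      refine hfin.trans_eq ?_
      ring
end
end
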